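/- arXiv:2207.00279 — 3 statements merged into one kernel-verified Lean document; each statement's English description precedes it below -/
import Mathlib

section
/- Let ε > 0 and let U : ℝ → ℂ be a continuously differentiable function with compact support. Then ∫₀^∞ (r + ε)⁻² |U(r)|² dr ≤ (2/ε) |U(0)|² + 4 ∫₀^∞ |U'(r)|² dr. -/
/-!
With `φ = ‖U‖²`, integration by parts against the weight `(r + ε)⁻¹` gives
`∫ (r + ε)⁻¹ φ' = ∫ (r + ε)⁻² φ - φ 0 / ε`. Since `φ' = 2 ⟪U, U'⟫`, AM-GM bounds the left side
by `½ ∫ (r + ε)⁻² φ + 2 ∫ ‖U'‖²`, and absorbing the half into the right side gives the inequality.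
-/

open MeasureTheory Filter Set

open scoped RealInnerProductSpace

theorem mul_two_mul_inner_le {E : Type*} [NormedAddCommGroup E] [InnerProductSpace ℝ E]
    (t : ℝ) (x y : E) : t * (2 * ⟪x, y⟫) ≤ t ^ 2 * ‖x‖ ^ 2 / 2 + 2 * ‖y‖ ^ 2 := by
  have h := real_inner_le_norm (t • x) y
  rw [real_inner_smul_left, norm_smul, Real.norm_eq_abs] at h
  nlinarith [sq_nonneg (|t| * ‖x‖ - 2 * ‖y‖), sq_abs t]

theorem HasCompactSupport.integrableOn_Ioi_inv_add_pow_mul {g : ℝ → ℝ} (hg : Continuous g)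
    (hsupp : HasCompactSupport g) {ε : ℝ} (hε : 0 < ε) (k : ℕ) :
    IntegrableOn (fun r ↦ (r + ε)⁻¹ ^ k * g r) (Ioi 0) := by
  refine (hg.integrable_of_hasCompactSupport hsupp).integrableOn.bdd_mul (c := ε⁻¹ ^ k)
    (by fun_prop) ((ae_restrict_iff' measurableSet_Ioi).2 (.of_forall fun r (hr : 0 < r) ↦ ?_))
  rw [norm_pow, Real.norm_of_nonneg (by positivity)]
  gcongr
  linarith

theorem integral_Ioi_inv_add_mul_deriv {φ : ℝ → ℝ} (hφ : ContDiff ℝ 1 φ)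
    (hsupp : HasCompactSupport φ) {ε : ℝ} (hε : 0 < ε) :
    ∫ r in Ioi 0, (r + ε)⁻¹ * deriv φ r = (∫ r in Ioi 0, (r + ε)⁻¹ ^ 2 * φ r) - ε⁻¹ * φ 0 := by
  have hw : ∀ r ∈ Ioi (0 : ℝ), HasDerivAt (fun r ↦ (r + ε)⁻¹) (-((r + ε)⁻¹ ^ 2)) r := by
    intro r (hr : 0 < r)
    simpa [inv_pow, Pi.inv_def, neg_div, one_div] using
      ((hasDerivAt_id r).add_const ε).inv (by positivity)
  have hw0 : ContinuousAt (fun r : ℝ ↦ (r + ε)⁻¹ * φ r) 0 :=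
    ((continuousAt_id.add continuousAt_const).inv₀ (by simpa using hε.ne')).mul
      hφ.continuous.continuousAt
  have := integral_Ioi_mul_deriv_eq_deriv_mul hw
    (fun r _ ↦ (hφ.differentiable one_ne_zero r).hasDerivAt)
    (hsupp.deriv.integrableOn_Ioi_inv_add_pow_mul (hφ.continuous_deriv le_rfl) hε 1
      |>.congr_fun (fun r _ ↦ by simp) measurableSet_Ioi)
    ((hsupp.integrableOn_Ioi_inv_add_pow_mul hφ.continuous hε 2).neg.congr_fun
      (fun r _ ↦ by simp) measurableSet_Ioi)
    (hw0.tendsto.mono_left nhdsWithin_le_nhds)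
    ((hsupp.mul_left.is_zero_at_infty).mono_left atTop_le_cocompact)
  simpa [integral_neg, neg_add_eq_sub] using this

/-- Hardy-type inequality (a1): for `ε > 0` and `U : ℝ → ℂ` continuously
differentiable with compact support,
`∫₀^∞ (r+ε)⁻² |U r|² dr ≤ (2/ε) |U 0|² + 4 ∫₀^∞ |U' r|² dr`. -/
theorem hardy_type_inequality (ε : ℝ) (hε : 0 < ε) (U : ℝ → ℂ)
    (hU : ContDiff ℝ 1 U) (hsupp : HasCompactSupport U) :
    ∫ r in Set.Ioi (0 : ℝ), (r + ε)⁻¹ ^ 2 * ‖U r‖ ^ 2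
      ≤ (2 / ε) * ‖U 0‖ ^ 2 + 4 * ∫ r in Set.Ioi (0 : ℝ), ‖deriv U r‖ ^ 2 := by
  set φ : ℝ → ℝ := fun r ↦ ‖U r‖ ^ 2
  have hφ : ContDiff ℝ 1 φ := (contDiff_norm_sq ℝ).comp hU
  have hφsupp : HasCompactSupport φ := hsupp.comp_left (g := fun z ↦ ‖z‖ ^ 2) (by simp)
  have hderiv (r : ℝ) : HasDerivAt φ (2 * ⟪U r, deriv U r⟫) r :=
    (hU.differentiable one_ne_zero r).hasDerivAt.norm_sq
  have hU' : Continuous (deriv U) := hU.continuous_deriv le_rfl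
  have hint_φ := hφsupp.integrableOn_Ioi_inv_add_pow_mul hφ.continuous hε 2
  have hint_U' : IntegrableOn (fun r ↦ ‖deriv U r‖ ^ 2) (Ioi 0) :=
    ((by fun_prop : Continuous fun r ↦ ‖deriv U r‖ ^ 2).integrable_of_hasCompactSupport
      (hsupp.deriv.comp_left (g := fun z ↦ ‖z‖ ^ 2) (by simp))).integrableOn
  have hbound : ∫ r in Ioi 0, (r + ε)⁻¹ * deriv φ r
      ≤ ∫ r in Ioi 0, ((r + ε)⁻¹ ^ 2 * φ r / 2 + 2 * ‖deriv U r‖ ^ 2) := by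
    refine setIntegral_mono
      (hφsupp.deriv.integrableOn_Ioi_inv_add_pow_mul (hφ.continuous_deriv le_rfl) hε 1
        |>.congr_fun (fun r _ ↦ by simp) measurableSet_Ioi)
      ((hint_φ.div_const 2).add (hint_U'.const_mul 2)) fun r ↦ ?_
    rw [(hderiv r).deriv]
    exact mul_two_mul_inner_le _ _ _
  rw [integral_Ioi_inv_add_mul_deriv hφ hφsupp hε, integral_add (hint_φ.div_const 2)
    (hint_U'.const_mul 2), integral_div, integral_const_mul] at hbound
  have hφ0 : 2 / ε * φ 0 = 2 * (ε⁻¹ * φ 0) := by ring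
  linarith
end

section
/- Let U : ℝ → ℂ be a continuously differentiable function with compact support such that U(0) = 0. Then ∫₀^∞ r⁻² |U(r)|² dr ≤ 4 ∫₀^∞ |U'(r)|² dr. -/
/-!
Write `V r = r⁻¹ • U r`; it is bounded since `U 0 = 0` and `U'` is bounded. Expanding
`0 ≤ ‖U' - V / 2‖²` gives `‖V‖² / 4 ≤ ‖U'‖² - (⟪V, U'⟫ - ‖V‖² / 2)`, and the bracket is the
derivative of `‖U r‖² / (2 r) = r ‖V r‖² / 2` on `(0, ∞)`. That function tends to `0` both as
`r → 0⁺` and as `r → ∞`, so the bracket integrates to `0`, and integrating the pointwise bound gives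
the inequality.
-/

open MeasureTheory Filter Topology Set RealInnerProductSpace

section

variable {E : Type*} [NormedAddCommGroup E] [InnerProductSpace ℝ E]

lemma norm_sq_div_four_le_norm_sq_sub_inner (v w : E) :
    ‖v‖ ^ 2 / 4 ≤ ‖w‖ ^ 2 - (⟪v, w⟫ - ‖v‖ ^ 2 / 2) := by
  have h := norm_sub_sq_real w ((2 : ℝ)⁻¹ • v)
  rw [real_inner_smul_right, norm_smul, real_inner_comm] at h
  norm_num at h
  nlinarith [sq_nonneg ‖w - (2 : ℝ)⁻¹ • v‖]

lemma hasDerivAt_inv_mul_norm_sq_div_two {U : ℝ → E} {U' : E} {x : ℝ}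
    (hU : HasDerivAt U U' x) (hx : x ≠ 0) :
    HasDerivAt (fun r ↦ r⁻¹ * ‖U r‖ ^ 2 / 2) (⟪x⁻¹ • U x, U'⟫ - ‖x⁻¹ • U x‖ ^ 2 / 2) x := by
  refine (((hasDerivAt_inv hx).mul hU.norm_sq).div_const 2).congr_deriv ?_
  rw [real_inner_smul_left, norm_smul, norm_inv, Real.norm_eq_abs, mul_pow, inv_pow, sq_abs]
  ring

lemma inv_mul_norm_sq_div_two_eq (u : E) (r : ℝ) :
    r⁻¹ * ‖u‖ ^ 2 / 2 = r * (‖r⁻¹ • u‖ ^ 2 / 2) := by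
  rcases eq_or_ne r 0 with rfl | hr
  · simp
  · rw [norm_smul, norm_inv, Real.norm_eq_abs, mul_pow, inv_pow, sq_abs]
    field_simp

lemma norm_inv_smul_le_of_norm_deriv_le {U : ℝ → E} (hU : Differentiable ℝ U) (h0 : U 0 = 0)
    {M : ℝ} (hM : ∀ x, ‖deriv U x‖ ≤ M) (r : ℝ) : ‖r⁻¹ • U r‖ ≤ M := by
  have hM0 : 0 ≤ M := (norm_nonneg _).trans (hM 0)
  have hmv := Convex.norm_image_sub_le_of_norm_deriv_le (fun x _ ↦ hU x) (fun x _ ↦ hM x)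
    convex_univ (mem_univ 0) (mem_univ r)
  rw [h0, sub_zero, sub_zero] at hmv
  rw [norm_smul, norm_inv]
  rcases eq_or_ne r 0 with rfl | hr
  · simpa using hM0
  · rwa [inv_mul_le_iff₀ (norm_pos_iff.mpr hr), mul_comm]

lemma HasCompactSupport.integrable_of_bound {X F : Type*} [TopologicalSpace X] [MeasurableSpace X]
    {μ : Measure X} [IsFiniteMeasureOnCompacts μ] [NormedAddCommGroup F] {f : X → F}
    (hf : HasCompactSupport f) (hmeas : AEStronglyMeasurable f μ) (C : ℝ) (hC : ∀ x, ‖f x‖ ≤ C) :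
    Integrable f μ :=
  memLp_one_iff_integrable.mp (hf.memLp_of_bound hmeas C (ae_of_all _ hC))

lemma exists_norm_inv_smul_le {U : ℝ → E} (hU : ContDiff ℝ 1 U) (hsupp : HasCompactSupport U)
    (h0 : U 0 = 0) : ∃ M, ∀ r : ℝ, ‖r⁻¹ • U r‖ ≤ M := by
  obtain ⟨M, hM⟩ := hsupp.deriv.exists_bound_of_continuous (hU.continuous_deriv le_rfl)
  exact ⟨M, norm_inv_smul_le_of_norm_deriv_le (hU.differentiable one_ne_zero) h0 hM⟩

lemma integrable_norm_inv_smul_sq {U : ℝ → E} (hU : ContDiff ℝ 1 U) (hsupp : HasCompactSupport U)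
    (h0 : U 0 = 0) : Integrable (fun r : ℝ ↦ ‖r⁻¹ • U r‖ ^ 2) := by
  obtain ⟨M, hM⟩ := exists_norm_inv_smul_le hU hsupp h0
  refine HasCompactSupport.integrable_of_bound ?_ ?_ (M ^ 2) fun r ↦ ?_
  · exact hsupp.mono fun r hr h ↦ hr (by simp [h])
  · have := hU.continuous.aestronglyMeasurable (μ := volume)
    fun_prop
  · simpa using pow_le_pow_left₀ (norm_nonneg _) (hM r) 2

lemma integrable_inner_inv_smul_deriv {U : ℝ → E} (hU : ContDiff ℝ 1 U)
    (hsupp : HasCompactSupport U) (h0 : U 0 = 0) :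
    Integrable (fun r : ℝ ↦ ⟪r⁻¹ • U r, deriv U r⟫) := by
  obtain ⟨M, hM⟩ := exists_norm_inv_smul_le hU hsupp h0
  obtain ⟨M', hM'⟩ := hsupp.deriv.exists_bound_of_continuous (hU.continuous_deriv le_rfl)
  refine HasCompactSupport.integrable_of_bound ?_ ?_ (M * M') fun r ↦ ?_
  · exact hsupp.deriv.mono fun r hr h ↦ hr (by simp [h])
  · have := hU.continuous.aestronglyMeasurable (μ := volume)
    have := (hU.continuous_deriv le_rfl).aestronglyMeasurable (μ := volume)
    fun_prop
  · exact (norm_inner_le_norm _ _).trans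
      (mul_le_mul (hM r) (hM' r) (norm_nonneg _) ((norm_nonneg _).trans (hM 0)))

lemma integral_Ioi_inner_inv_smul_deriv_sub_eq_zero {U : ℝ → E} (hU : ContDiff ℝ 1 U)
    (hsupp : HasCompactSupport U) (h0 : U 0 = 0) :
    ∫ r in Ioi 0, (⟪r⁻¹ • U r, deriv U r⟫ - ‖r⁻¹ • U r‖ ^ 2 / 2) = 0 := by
  set g : ℝ → ℝ := fun r ↦ r⁻¹ * ‖U r‖ ^ 2 / 2
  obtain ⟨M, hM⟩ := exists_norm_inv_smul_le hU hsupp h0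
  -- `g 0 = 0` because `0⁻¹ = 0`, and `g` is `r` times a bounded function
  have hg_zero : ContinuousWithinAt g (Ici 0) 0 := by
    refine ContinuousAt.continuousWithinAt ?_
    have hbdd : IsBoundedUnder (· ≤ ·) (𝓝 (0 : ℝ)) fun r ↦ ‖‖r⁻¹ • U r‖ ^ 2 / 2‖ :=
      isBoundedUnder_of ⟨M ^ 2 / 2, fun r ↦ by
        rw [Real.norm_of_nonneg (by positivity)]
        gcongr
        exact hM r⟩
    simpa [ContinuousAt, g, inv_mul_norm_sq_div_two_eq] using
      tendsto_id.zero_mul_isBoundedUnder_le hbdd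
  have hg_deriv (x : ℝ) (hx : x ∈ Ioi 0) :
      HasDerivAt g (⟪x⁻¹ • U x, deriv U x⟫ - ‖x⁻¹ • U x‖ ^ 2 / 2) x :=
    hasDerivAt_inv_mul_norm_sq_div_two (hU.differentiable one_ne_zero x).hasDerivAt hx.ne'
  have hg_top : Tendsto g atTop (𝓝 0) :=
    ((hsupp.mono fun r hr h ↦ hr (by simp [g, h])).is_zero_at_infty).mono_left atTop_le_cocompact
  have hint := (integrable_inner_inv_smul_deriv hU hsupp h0).sub
    ((integrable_norm_inv_smul_sq hU hsupp h0).div_const 2)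
  simpa [g] using integral_Ioi_of_hasDerivAt_of_tendsto hg_zero hg_deriv hint.integrableOn hg_top

theorem integral_Ioi_norm_inv_smul_sq_le {U : ℝ → E} (hU : ContDiff ℝ 1 U)
    (hsupp : HasCompactSupport U) (h0 : U 0 = 0) :
    ∫ r in Ioi 0, ‖r⁻¹ • U r‖ ^ 2 ≤ 4 * ∫ r in Ioi 0, ‖deriv U r‖ ^ 2 := by
  have hV := integrable_norm_inv_smul_sq hU hsupp h0
  have hG : Integrable fun r : ℝ ↦ ⟪r⁻¹ • U r, deriv U r⟫ - ‖r⁻¹ • U r‖ ^ 2 / 2 :=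
    (integrable_inner_inv_smul_deriv hU hsupp h0).sub (hV.div_const 2)
  have hU' : Integrable fun r ↦ ‖deriv U r‖ ^ 2 :=
    ((hU.continuous_deriv le_rfl).norm.pow 2).integrable_of_hasCompactSupport
      (hsupp.deriv.mono fun r hr h ↦ hr (by simp [h]))
  have hmono : ∫ r in Ioi 0, ‖r⁻¹ • U r‖ ^ 2 / 4 ≤
      ∫ r in Ioi 0, (‖deriv U r‖ ^ 2 - (⟪r⁻¹ • U r, deriv U r⟫ - ‖r⁻¹ • U r‖ ^ 2 / 2)) :=
    integral_mono (hV.div_const 4).integrableOn (hU'.sub hG).integrableOn fun r ↦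
      norm_sq_div_four_le_norm_sq_sub_inner (r⁻¹ • U r) (deriv U r)
  rw [integral_div, integral_sub hU'.integrableOn hG.integrableOn,
    integral_Ioi_inner_inv_smul_deriv_sub_eq_zero hU hsupp h0, sub_zero] at hmono
  linarith

end

/-- Hardy inequality (ε = 0 case of (a1)): for `U : ℝ → ℂ` continuously
differentiable with compact support and `U 0 = 0`,
`∫₀^∞ r⁻² |U r|² dr ≤ 4 ∫₀^∞ |U' r|² dr`. -/
theorem hardy_inequality_zero (U : ℝ → ℂ)
    (hU : ContDiff ℝ 1 U) (hsupp : HasCompactSupport U) (h0 : U 0 = 0) :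
    ∫ r in Set.Ioi (0 : ℝ), r⁻¹ ^ 2 * ‖U r‖ ^ 2
      ≤ 4 * ∫ r in Set.Ioi (0 : ℝ), ‖deriv U r‖ ^ 2 := by
  simpa only [norm_smul, norm_inv, Real.norm_eq_abs, mul_pow, inv_pow, sq_abs] using
    integral_Ioi_norm_inv_smul_sq_le hU hsupp h0
end

section
/- Let F : ℝ → ℂ be twice continuously differentiable on [0, ∞) with F''(t) = −i·λ·b·F(t) for all t ≥ 0, such that F(t) → 0 as t → +∞ and F'(0) = 1. Then F(t) = E(t) for all t ≥ 0. -/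
/-! Put `α = ((-1 + i)/√2)·√(λb)`, so that `α² = -iλb` and `Re α < 0`. Then `(F' ± αF)' = ±α(F' ± αF)`,
so `F' ± αF` are multiples of `e^{±αt}`. Their difference `2αF` tends to `0`, as does `e^{αt}`, which
forces the coefficient of the growing mode `e^{-αt}` to vanish. Hence `F' = αF`, so `F = F(0) e^{αt}`,
and `F'(0) = 1` gives `F(0) = α⁻¹ = -(1 + i)/√(2λb)`. -/

open Complex Filter Set

theorem eq_mul_cexp_of_hasDerivWithinAt {s : Set ℝ} (hs : Convex ℝ s) (h0 : (0 : ℝ) ∈ s)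
    {g : ℝ → ℂ} {β : ℂ} (hg : ∀ t ∈ s, HasDerivWithinAt g (β * g t) s t) :
    ∀ t ∈ s, g t = g 0 * exp (β * t) := by
  have hexp (γ : ℂ) (t : ℝ) : HasDerivAt (fun u : ℝ => exp (γ * u)) (γ * exp (γ * t)) t := by
    simpa [mul_comm] using (((hasDerivAt_id (t : ℂ)).const_mul γ).cexp).comp_ofReal
  have hconst : ∀ t ∈ s, HasDerivWithinAt (fun u : ℝ => exp (-β * u) * g u) 0 s t := fun t ht =>
    ((hexp (-β) t).hasDerivWithinAt.mul (hg t ht)).congr_deriv (by ring)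
  intro t ht
  have h := hs.norm_image_sub_le_of_norm_hasDerivWithin_le hconst (fun _ _ => norm_zero.le) h0 ht
  rw [zero_mul, norm_le_zero_iff, sub_eq_zero, ofReal_zero, mul_zero, exp_zero, one_mul] at h
  calc g t = exp (β * t) * (exp (-β * t) * g t) := by
        rw [← mul_assoc, ← exp_add, neg_mul, add_neg_cancel, exp_zero, one_mul]
    _ = g 0 * exp (β * t) := by rw [h, mul_comm]

theorem tendsto_cexp_mul_atTop_nhds_zero {α : ℂ} (hα : α.re < 0) :
    Tendsto (fun t : ℝ => exp (α * t)) atTop (nhds 0) := by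
  rw [tendsto_exp_nhds_zero_iff]
  simpa only [re_mul_ofReal, id] using tendsto_id.const_mul_atTop_of_neg hα

theorem eq_zero_of_tendsto_mul_cexp_neg {α c : ℂ} (hα : α.re < 0)
    (h : Tendsto (fun t : ℝ => c * exp (-α * t)) atTop (nhds 0)) : c = 0 := by
  have hprod := h.mul (tendsto_cexp_mul_atTop_nhds_zero hα)
  rw [mul_zero] at hprod
  refine tendsto_nhds_unique (hprod.congr fun t => ?_) tendsto_const_nhds |>.symm
  rw [mul_assoc, ← exp_add, neg_mul, neg_add_cancel, exp_zero, mul_one]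

theorem derivWithin_Ici_eq_mul_of_tendsto_zero {F : ℝ → ℂ} {α : ℂ} (hα : α.re < 0)
    (hF : ContDiffOn ℝ 2 F (Ici 0))
    (hode : ∀ t ∈ Ici (0 : ℝ), derivWithin (derivWithin F (Ici 0)) (Ici 0) t = α ^ 2 * F t)
    (hdecay : Tendsto F atTop (nhds 0)) :
    ∀ t ∈ Ici (0 : ℝ), derivWithin F (Ici 0) t = α * F t := by
  set F' := derivWithin F (Ici 0)
  have hF1 : ∀ t ∈ Ici (0 : ℝ), HasDerivWithinAt F (F' t) (Ici 0) t := fun t ht =>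
    ((hF.differentiableOn two_ne_zero) t ht).hasDerivWithinAt
  have hF2 : ∀ t ∈ Ici (0 : ℝ), HasDerivWithinAt F' (α ^ 2 * F t) (Ici 0) t := fun t ht => by
    rw [← hode t ht]
    exact (((hF.derivWithin (uniqueDiffOn_Ici 0) (by norm_num)).differentiableOn
      one_ne_zero) t ht).hasDerivWithinAt
  have hplus := eq_mul_cexp_of_hasDerivWithinAt (convex_Ici 0) self_mem_Ici
    (g := fun t => F' t + α * F t) (β := α) fun t ht =>
      ((hF2 t ht).add ((hF1 t ht).const_mul α)).congr_deriv (by ring)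
  have hminus := eq_mul_cexp_of_hasDerivWithinAt (convex_Ici 0) self_mem_Ici
    (g := fun t => F' t - α * F t) (β := -α) fun t ht =>
      ((hF2 t ht).sub ((hF1 t ht).const_mul α)).congr_deriv (by ring)
  have hc : F' 0 - α * F 0 = 0 := by
    refine eq_zero_of_tendsto_mul_cexp_neg hα ?_
    have h := ((tendsto_cexp_mul_atTop_nhds_zero hα).const_mul (F' 0 + α * F 0)).sub
      (hdecay.const_mul (2 * α))
    rw [mul_zero, mul_zero, sub_zero] at h
    refine h.congr' ?_
    filter_upwards [eventually_ge_atTop 0] with t ht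
    rw [← hplus t ht, ← hminus t ht]
    ring
  intro t ht
  simpa [hc, sub_eq_zero] using hminus t ht

theorem ofReal_sqrt_two_sq : ((Real.sqrt 2 : ℝ) : ℂ) ^ 2 = 2 := by
  rw [← ofReal_pow, Real.sq_sqrt zero_le_two, ofReal_ofNat]

theorem neg_one_add_I_div_sqrt_two_sq : ((-1 + I) / (Real.sqrt 2 : ℂ)) ^ 2 = -I := by
  rw [div_pow, ofReal_sqrt_two_sq]
  linear_combination (1 / 2 : ℂ) * I_sq

theorem neg_one_add_I_div_sqrt_two_re_neg : ((-1 + I) / (Real.sqrt 2 : ℂ)).re < 0 := by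
  rw [div_ofReal_re, add_re, neg_re, one_re, I_re, add_zero]
  exact div_neg_of_neg_of_pos neg_one_lt_zero (by positivity)

theorem neg_one_add_I_div_sqrt_two_inv :
    ((-1 + I) / (Real.sqrt 2 : ℂ))⁻¹ = -(1 + I) / (Real.sqrt 2 : ℂ) := by
  have hne : -1 + I ≠ 0 := fun h => by simpa using congrArg im h
  rw [inv_div, div_eq_div_iff hne (by simp)]
  linear_combination ofReal_sqrt_two_sq + I_sq

/-- Uniqueness of the decaying solution of the boundary-layer equation (39) with unit
normal derivative at `t = 0`: if `F` is twice continuously differentiable on `[0,∞)`,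
`F'' = −iλb F` on `[0,∞)`, `F(t) → 0` as `t → +∞`, and `F'(0) = 1`, then `F` coincides
on `[0,∞)` with the explicit profile (38). -/
theorem boundary_layer_profile_unique (lam b : ℝ) (hlam : 0 < lam) (hb : 0 < b)
    (E : ℝ → ℂ)
    (hE : E = fun t : ℝ =>
      -((1 + Complex.I) / (Real.sqrt (2 * lam * b) : ℂ)) *
        Complex.exp (((-1 + Complex.I) / (Real.sqrt 2 : ℂ)) *
          (Real.sqrt (lam * b) : ℂ) * (t : ℂ)))
    (F : ℝ → ℂ) (hF : ContDiffOn ℝ 2 F (Set.Ici 0))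
    (hode : ∀ t : ℝ, 0 ≤ t →
      derivWithin (derivWithin F (Set.Ici 0)) (Set.Ici 0) t
        = -(Complex.I * (lam : ℂ) * (b : ℂ)) * F t)
    (hdecay : Tendsto F atTop (nhds 0))
    (hder0 : derivWithin F (Set.Ici 0) 0 = 1) :
    ∀ t : ℝ, 0 ≤ t → F t = E t := by
  have hlb : 0 < lam * b := mul_pos hlam hb
  set s := Real.sqrt (lam * b)
  set α : ℂ := (-1 + I) / (Real.sqrt 2 : ℂ) * s
  have hα2 : α ^ 2 = -(I * lam * b) := by
    rw [mul_pow, neg_one_add_I_div_sqrt_two_sq, ← ofReal_pow, Real.sq_sqrt hlb.le]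
    push_cast
    ring
  have hαre : α.re < 0 := by
    rw [re_mul_ofReal]
    exact mul_neg_of_neg_of_pos neg_one_add_I_div_sqrt_two_re_neg (Real.sqrt_pos.mpr hlb)
  have hderiv := derivWithin_Ici_eq_mul_of_tendsto_zero hαre hF
    (fun t ht => (hode t ht).trans (by rw [hα2])) hdecay
  have hF0 : F 0 = α⁻¹ := eq_inv_of_mul_eq_one_right ((hderiv 0 self_mem_Ici).symm.trans hder0)
  have hsqrt : Real.sqrt (2 * lam * b) = Real.sqrt 2 * s := by
    rw [mul_assoc, Real.sqrt_mul zero_le_two]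
  intro t ht
  have hexp := eq_mul_cexp_of_hasDerivWithinAt (convex_Ici 0) self_mem_Ici (fun u hu =>
    hderiv u hu ▸ (hF.differentiableOn two_ne_zero u hu).hasDerivWithinAt) t ht
  rw [hexp, hF0, hE, mul_inv, neg_one_add_I_div_sqrt_two_inv, hsqrt, ofReal_mul]
  ring
end
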